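/- arXiv:2204.10611 — 6 statements merged into one kernel-verified Lean document; each statement's English description precedes it below -/
import Mathlib

section
/- Let c ≥ 1 and a be natural numbers with a < 2^c, and let I be uniformly distributed on the integers {0, 1, …, 2^c + a}. Then for every bit position b with 0 ≤ b ≤ c − 1, the probability that the b-th binary digit of I equals 1 satisfies 1/4 ≤ Pr[bit_b(I) = 1] ≤ 3/4. -/
lemma testbit_iff (b N : ℕ) : Nat.testBit N b = decide (2 ^ b ≤ N % 2 ^ (b + 1)) := by
  have h1 : Nat.testBit N b = Nat.testBit (N % 2 ^ (b+1)) b := by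
    rw [Nat.testBit_mod_two_pow]
    simp [Nat.lt_succ_self]
  set m := N % 2 ^ (b+1) with hm
  have hq : 0 < 2 ^ b := Nat.pow_pos (by norm_num)
  have hmlt : m < 2 ^ (b+1) := Nat.mod_lt _ (Nat.pow_pos (by norm_num))
  have hdle : m / 2 ^ b < 2 := Nat.div_lt_of_lt_mul (by rw [← pow_succ]; exact hmlt)
  rw [h1, Nat.testBit_eq_decide_div_mod_eq]
  have h2 : m / 2 ^ b % 2 = m / 2 ^ b := Nat.mod_eq_of_lt hdle
  rw [h2]
  have h3 : 1 ≤ m / 2 ^ b ↔ 2 ^ b ≤ m := Nat.one_le_div_iff hq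
  by_cases h : 2 ^ b ≤ m <;> simp [h] <;> omega

lemma count_bit (b : ℕ) : ∀ N : ℕ,
    ((Finset.range N).filter (fun i => Nat.testBit i b)).card
      = N / 2 ^ (b + 1) * 2 ^ b + (N % 2 ^ (b + 1) - 2 ^ b) := by
  intro N
  induction N with
  | zero => simp
  | succ N ih =>
    rw [Finset.range_add_one, Finset.filter_insert]
    have hq : 0 < 2 ^ b := Nat.pow_pos (by norm_num)
    have hP : 2 ^ (b + 1) = 2 * 2 ^ b := by rw [pow_succ]; ring
    set q := 2 ^ b with hqdef
    set P := 2 ^ (b+1) with hPdef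
    have hPpos : 0 < P := by omega
    have hrlt : N % P < P := Nat.mod_lt _ hPpos
    have hNd : P * (N / P) + N % P = N := Nat.div_add_mod N P
    set m := N / P with hm
    set r := N % P with hr
    have hbit : Nat.testBit N b = decide (q ≤ r) := testbit_iff b N
    by_cases hcase : r + 1 < P
    · have hdiv : (N + 1) / P = m := by
        have : N + 1 = P * m + (r + 1) := by omega
        rw [this, Nat.mul_add_div hPpos, Nat.div_eq_of_lt hcase]
        simp
      have hmod : (N + 1) % P = r + 1 := by
        have : N + 1 = P * m + (r + 1) := by omega
        rw [this, Nat.mul_add_mod, Nat.mod_eq_of_lt hcase]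
      rw [hdiv, hmod]
      by_cases hbr : q ≤ r
      · rw [if_pos (by simp [hbit, hbr])]
        rw [Finset.card_insert_of_notMem (by simp)]
        omega
      · rw [if_neg (by simp [hbit, hbr])]
        omega
    · have hr1 : r + 1 = P := by omega
      have hPm : P * (m + 1) = P * m + P := by ring
      have hdiv : (N + 1) / P = m + 1 := by
        have h5 : N + 1 = P * (m + 1) := by omega
        rw [h5, Nat.mul_div_cancel_left _ hPpos]
      have hmod : (N + 1) % P = 0 := by
        have h5 : N + 1 = P * (m + 1) := by omega
        rw [h5, Nat.mul_mod_right]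
      have hbr : q ≤ r := by omega
      rw [hdiv, hmod, if_pos (by simp [hbit, hbr])]
      rw [Finset.card_insert_of_notMem (by simp)]
      rw [ih]
      have : (m + 1) * q = m * q + q := by ring
      omega

/-- For `c ≥ 1`, `a < 2^c`, and `I` uniform on `{0, …, 2^c + a}`,
for every bit position `b ≤ c - 1`, `1/4 ≤ Pr[bit_b(I) = 1] ≤ 3/4`. -/
theorem stmt_0 (c a : ℕ) (hc : 1 ≤ c) (ha : a < 2 ^ c) (b : ℕ) (hb : b ≤ c - 1) :
    1 / 4 ≤ (PMF.uniformOfFinset (Finset.range (2 ^ c + a + 1))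
        (Finset.nonempty_range_iff.mpr (Nat.succ_ne_zero _))).toOuterMeasure
        {i | Nat.testBit i b = true} ∧
      (PMF.uniformOfFinset (Finset.range (2 ^ c + a + 1))
        (Finset.nonempty_range_iff.mpr (Nat.succ_ne_zero _))).toOuterMeasure
        {i | Nat.testBit i b = true} ≤ 3 / 4 := by
  set N := 2 ^ c + a + 1 with hN
  set K := ((Finset.range N).filter (fun i => Nat.testBit i b)).card with hK
  have hmeas : (PMF.uniformOfFinset (Finset.range N)
        (Finset.nonempty_range_iff.mpr (Nat.succ_ne_zero _))).toOuterMeasure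
        {i | Nat.testBit i b = true} = (K : ENNReal) / N := by
    rw [PMF.toOuterMeasure_uniformOfFinset_apply]
    congr 2
    · congr 1
      ext i
      simp
    · simp
  -- arithmetic bounds
  have hqpos : 0 < 2 ^ b := Nat.pow_pos (by norm_num)
  have hble : b + 1 ≤ c := by omega
  have hPle : 2 ^ (b + 1) ≤ 2 ^ c := Nat.pow_le_pow_right (by norm_num) hble
  have hKeq := count_bit b N
  have hlow : N ≤ 4 * K ∧ 4 * K ≤ 3 * N := by
    set q := 2 ^ b with hq
    set P := 2 ^ (b+1) with hP
    have hP2 : P = 2 * q := by rw [hP, hq, pow_succ]; ring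
    have hNdm : P * (N / P) + N % P = N := Nat.div_add_mod N P
    have hrlt : N % P < P := Nat.mod_lt _ (by omega)
    have hm1 : 1 ≤ N / P := (Nat.one_le_div_iff (by omega)).mpr (by omega)
    set m := N / P with hm
    set r := N % P with hr
    set s := m * q with hs
    have hqs : q ≤ s := Nat.le_mul_of_pos_left q hm1
    have hN2 : N = 2 * s + r := by rw [← hNdm, hP2, hs]; ring
    have hK2 : K = s + (r - q) := hK.trans hKeq
    omega
  obtain ⟨h1, h2⟩ := hlow
  rw [hmeas]
  have hNne : (N:ENNReal) ≠ 0 := by positivity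
  have hNtop : (N:ENNReal) ≠ ⊤ := ENNReal.natCast_ne_top N
  have h4ne : (4:ENNReal) ≠ 0 := by norm_num
  have h4top : (4:ENNReal) ≠ ⊤ := by norm_num
  constructor
  · rw [ENNReal.le_div_iff_mul_le (Or.inl hNne) (Or.inl hNtop),
      show (1:ENNReal)/4 * N = N / 4 by rw [one_div, div_eq_mul_inv, mul_comm],
      ENNReal.div_le_iff_le_mul (Or.inl h4ne) (Or.inl h4top)]
    have : N ≤ K * 4 := by omega
    exact_mod_cast this
  · rw [ENNReal.div_le_iff_le_mul (Or.inl hNne) (Or.inr (by norm_num)),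
      show (3:ENNReal)/4 * N = 3 * N / 4 by rw [div_eq_mul_inv, div_eq_mul_inv, mul_right_comm],
      ENNReal.le_div_iff_mul_le (Or.inl h4ne) (Or.inl h4top)]
    have : K * 4 ≤ 3 * N := by omega
    exact_mod_cast this
end

section
/- Let c and a be natural numbers with a < 2^c, and let I be uniformly distributed on the integers {0, 1, …, 2^c + a}. Then the probability that the c-th binary digit of I equals 1 (equivalently, that I ≥ 2^c) is at most 1/2. -/
/-- For `a < 2^c` and `I` uniform on `{0, …, 2^c + a}`,
the probability that the `c`-th binary digit of `I` equals 1 is at most `1/2`. -/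
theorem stmt_1 (c a : ℕ) (ha : a < 2 ^ c) :
    (PMF.uniformOfFinset (Finset.range (2 ^ c + a + 1))
        (Finset.nonempty_range_iff.mpr (Nat.succ_ne_zero _))).toOuterMeasure
      {i | Nat.testBit i c = true} ≤ 1 / 2 := by
  classical
  rw [PMF.toOuterMeasure_uniformOfFinset_apply]
  have hfilter : @Finset.filter ℕ (· ∈ {i | Nat.testBit i c = true})
      (fun a => Classical.propDecidable _) (Finset.range (2 ^ c + a + 1))
      = Finset.Ico (2 ^ c) (2 ^ c + a + 1) := by
    ext i
    simp only [Finset.mem_filter, Finset.mem_range, Set.mem_setOf_eq, Finset.mem_Ico]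
    constructor
    · rintro ⟨hi, ht⟩
      refine ⟨?_, hi⟩
      by_contra h
      push_neg at h
      exact absurd ht (by simp [Nat.testBit_lt_two_pow h])
    · rintro ⟨h1, h2⟩
      refine ⟨h2, ?_⟩
      have hlt : i < 2 ^ (c + 1) := by
        have : 2 ^ c + a + 1 ≤ 2 ^ (c + 1) := by
          rw [pow_succ]; omega
        omega
      rw [Nat.testBit_eq_decide_div_mod_eq]
      have : i / 2 ^ c = 1 := by
        have h2' : i / 2 ^ c < 2 := by
          rw [Nat.div_lt_iff_lt_mul (by positivity)]
          calc i < 2 ^ (c+1) := hlt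
            _ = 2 * 2 ^ c := by ring
        have h1' : 1 ≤ i / 2 ^ c := Nat.one_le_div_iff (by positivity) |>.mpr h1
        omega
      simp [this]
  rw [hfilter, Nat.card_Ico, Finset.card_range]
  have hsub : 2 ^ c + a + 1 - 2 ^ c = a + 1 := by omega
  rw [hsub]
  have hpos : ((a : ENNReal) + 1) ≠ 0 := by simp
  have hfin : ((a : ENNReal) + 1) ≠ ⊤ := by simp
  calc ((a + 1 : ℕ) : ENNReal) / ((2 ^ c + a + 1 : ℕ) : ENNReal)
      ≤ (((a : ENNReal) + 1) * 1) / (((a : ENNReal) + 1) * 2) := by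
        apply ENNReal.div_le_div
        · push_cast; simp
        · calc ((a : ENNReal) + 1) * 2 = (((a + 1) * 2 : ℕ) : ENNReal) := by push_cast; ring
            _ ≤ ((2 ^ c + a + 1 : ℕ) : ENNReal) := Nat.cast_le.mpr (by omega)
    _ = 1 / 2 := ENNReal.mul_div_mul_left _ _ hpos hfin
end

section
/- Let c and a be natural numbers with a < 2^c, and let I be uniformly distributed on the integers {0, 1, …, 2^c + a}. Then the expected number of ones in the binary expansion of I satisfies c/4 ≤ E[popcount(I)] ≤ (3c + 2)/4. -/
def popcount (n : ℕ) : ℕ := (Nat.bits n).count true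

lemma popcount_two_mul (n : ℕ) : popcount (2 * n) = popcount n := by
  rcases eq_or_ne n 0 with rfl | h
  · rfl
  · simp [popcount, Nat.bit0_bits n h]

lemma popcount_two_mul_add_one (n : ℕ) : popcount (2 * n + 1) = popcount n + 1 := by
  simp [popcount, Nat.bit1_bits n]

lemma popcount_two_pow_add (c : ℕ) : ∀ i < 2 ^ c, popcount (2 ^ c + i) = popcount i + 1 := by
  induction c with
  | zero =>
    intro i hi
    interval_cases i
    simp [popcount, Nat.one_bits, Nat.zero_bits]
  | succ c ih =>
    intro i hi
    have hj : i / 2 < 2 ^ c := by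
      rw [Nat.div_lt_iff_lt_mul (by norm_num)]
      calc i < 2 ^ (c+1) := hi
        _ = 2 ^ c * 2 := by ring
    have key : 2 ^ (c+1) + i = 2 * (2 ^ c + i / 2) + i % 2 := by
      have : (2:ℕ) ^ (c+1) = 2 * 2 ^ c := by ring
      omega
    rcases Nat.mod_two_eq_zero_or_one i with h | h
    · rw [key, h, add_zero, popcount_two_mul, ih _ hj, ← popcount_two_mul,
        show 2 * (i / 2) = i by omega]
    · rw [key, h, popcount_two_mul_add_one, ih _ hj,
        show popcount (i/2) + 1 = popcount (2 * (i/2) + 1) from (popcount_two_mul_add_one _).symm,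
        show 2 * (i / 2) + 1 = i by omega]

lemma popcount_le_of_lt_two_pow {c i : ℕ} (hi : i < 2 ^ c) : popcount i ≤ c := by
  calc popcount i ≤ (Nat.bits i).length := List.count_le_length
    _ = i.size := Nat.size_eq_bits_len i
    _ ≤ c := Nat.size_le.2 hi

lemma two_mul_sum_popcount (c : ℕ) :
    2 * ∑ i ∈ Finset.range (2 ^ c), popcount i = c * 2 ^ c := by
  induction c with
  | zero => simp [popcount]
  | succ c ih =>
    have hpow : 2 ^ (c + 1) - 2 ^ c = 2 ^ c := by
      rw [pow_succ]; omega
    have hsplit : ∑ i ∈ Finset.range (2 ^ (c+1)), popcount i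
        = ∑ i ∈ Finset.range (2 ^ c), popcount i
          + ∑ i ∈ Finset.range (2 ^ c), popcount (2 ^ c + i) := by
      rw [← Finset.sum_range_add_sum_Ico _
          (Nat.le_of_lt (Nat.pow_lt_pow_right one_lt_two c.lt_succ_self)),
        Finset.sum_Ico_eq_sum_range, hpow]
    have h2 : ∑ i ∈ Finset.range (2 ^ c), popcount (2 ^ c + i)
        = (∑ i ∈ Finset.range (2 ^ c), popcount i) + 2 ^ c := by
      calc ∑ i ∈ Finset.range (2 ^ c), popcount (2 ^ c + i)
          = ∑ i ∈ Finset.range (2 ^ c), (popcount i + 1) :=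
            Finset.sum_congr rfl fun i hi =>
              popcount_two_pow_add c i (Finset.mem_range.1 hi)
        _ = (∑ i ∈ Finset.range (2 ^ c), popcount i) + 2 ^ c := by
            rw [Finset.sum_add_distrib]; simp
    have e : (c+1) * 2 ^ (c+1) = 2 * (c * 2 ^ c) + 2 * 2 ^ c := by ring
    rw [hsplit, h2, e, ← ih]; ring

/-- For `a < 2^c` and `I` uniform on `{0, …, 2^c + a}`,
the expected number of ones in the binary expansion of `I` satisfies
`c/4 ≤ E[popcount I] ≤ (3c + 2)/4`. -/
theorem stmt_3 (c a : ℕ) (ha : a < 2 ^ c) :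
    (c : ℝ) / 4 ≤
        (∑' i : ℕ, ((PMF.uniformOfFinset (Finset.range (2 ^ c + a + 1))
          (Finset.nonempty_range_iff.mpr (Nat.succ_ne_zero _))) i).toReal *
          (popcount i : ℝ)) ∧
      (∑' i : ℕ, ((PMF.uniformOfFinset (Finset.range (2 ^ c + a + 1))
          (Finset.nonempty_range_iff.mpr (Nat.succ_ne_zero _))) i).toReal *
          (popcount i : ℝ)) ≤ (3 * (c : ℝ) + 2) / 4 := by
  set M : ℕ := 2 ^ c + a + 1 with hM
  set T : ℕ := ∑ i ∈ Finset.range M, popcount i with hT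
  have hsum : (∑' i : ℕ, ((PMF.uniformOfFinset (Finset.range M)
          (Finset.nonempty_range_iff.mpr (Nat.succ_ne_zero _))) i).toReal *
          (popcount i : ℝ)) = (T : ℝ) / M := by
    rw [tsum_eq_sum (s := Finset.range M) (by
      intro i hi
      rw [PMF.uniformOfFinset_apply_of_notMem _ hi]
      simp)]
    have hc : ∀ i ∈ Finset.range M,
        ((PMF.uniformOfFinset (Finset.range M)
          (Finset.nonempty_range_iff.mpr (Nat.succ_ne_zero _))) i).toReal *
          (popcount i : ℝ) = (popcount i : ℝ) / M := by
      intro i hi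
      rw [PMF.uniformOfFinset_apply_of_mem _ hi, ENNReal.toReal_inv]
      simp [Finset.card_range, div_eq_mul_inv, mul_comm]
    rw [Finset.sum_congr rfl hc, ← Finset.sum_div]
    push_cast [hT]
    ring
  rw [hsum]
  have hTlow : c * 2 ^ c ≤ 2 * T := by
    have h1 : ∑ i ∈ Finset.range (2 ^ c), popcount i ≤ T := by
      apply Finset.sum_le_sum_of_subset
      apply Finset.range_subset_range.2; omega
    have h3 := two_mul_sum_popcount c
    linarith
  have hThigh : 4 * T ≤ (3 * c + 2) * M := by
    have hsplit : T = ∑ i ∈ Finset.range (2 ^ c), popcount i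
        + ∑ i ∈ Finset.range (a + 1), popcount (2 ^ c + i) := by
      have hpow : 2 ^ c + a + 1 - 2 ^ c = a + 1 := by omega
      rw [hT, hM, ← Finset.sum_range_add_sum_Ico _ (show 2 ^ c ≤ 2 ^ c + a + 1 by omega),
        Finset.sum_Ico_eq_sum_range, hpow]
    have h2 : ∑ i ∈ Finset.range (a + 1), popcount (2 ^ c + i)
        ≤ (a + 1) * (c + 1) := by
      calc ∑ i ∈ Finset.range (a + 1), popcount (2 ^ c + i)
          ≤ ∑ _i ∈ Finset.range (a + 1), (c + 1) := by
            apply Finset.sum_le_sum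
            intro i hi
            have hi' := Finset.mem_range.1 hi
            rw [popcount_two_pow_add c i (by omega)]
            have : popcount i ≤ c := popcount_le_of_lt_two_pow (show i < 2 ^ c by omega)
            omega
        _ = (a + 1) * (c + 1) := by rw [Finset.sum_const]; simp [mul_comm]
    have h3 := two_mul_sum_popcount c
    have hle : (a + 1) * (c + 2) ≤ 2 ^ c * (c + 2) :=
      Nat.mul_le_mul_right _ (by omega)
    nlinarith [hsplit, h2, h3, hle]
  have hMpos : (0:ℝ) < M := by positivity
  constructor
  · rw [div_le_div_iff₀ (by norm_num) hMpos]
    have h1 : (M:ℝ) ≤ 2 * 2 ^ c := by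
      have : M ≤ 2 * 2 ^ c := by omega
      exact_mod_cast this
    have h2 : (c:ℝ) * 2 ^ c ≤ 2 * T := by exact_mod_cast hTlow
    have hc0 : (0:ℝ) ≤ (c:ℝ) := by positivity
    nlinarith
  · rw [div_le_div_iff₀ hMpos (by norm_num)]
    have h4 : (4:ℝ) * T ≤ (3 * c + 2) * M := by exact_mod_cast hThigh
    nlinarith
end

section
/- Small-amount case of the splitting protocol produces at most k pieces: let κ ≥ 1 and k = 2^κ, let t ≥ 1 be a natural number, and define e = 1 if ⌊log₂ t⌋ + 1 ≤ k/2 and e = 2^{⌊log₂ t⌋ + 1 − k/2} otherwise; set n = ⌊t/e⌋. Then for every integer i with 0 ≤ i ≤ n, popcount(i) + popcount(n − i) ≤ k. -/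
lemma popcount_le_of_lt_two_pow_s10 {m c : ℕ} (h : m < 2 ^ c) : popcount m ≤ c := by
  calc popcount m ≤ (Nat.bits m).length := List.count_le_length
    _ = Nat.size m := Nat.size_eq_bits_len m
    _ ≤ c := Nat.size_le.mpr h

/-- Small-amount case of the splitting protocol produces at most
`k` pieces: with `κ ≥ 1`, `k = 2^κ`, `t ≥ 1`,
`e = max {1, 2^(⌊log₂ t⌋ + 1 − k/2)}` and `n = ⌊t/e⌋`, every `i ≤ n` satisfies
`popcount i + popcount (n − i) ≤ k`. -/
theorem stmt_10 (κ t k e n : ℕ) (hκ : 1 ≤ κ) (ht : 1 ≤ t) (hk : k = 2 ^ κ)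
    (he : e = if Nat.log 2 t + 1 ≤ k / 2 then 1 else 2 ^ (Nat.log 2 t + 1 - k / 2))
    (hn : n = t / e) :
    ∀ i ≤ n, popcount i + popcount (n - i) ≤ k := by
  have ht2 : t < 2 ^ (Nat.log 2 t + 1) := Nat.lt_pow_succ_log_self one_lt_two t
  have hnlt : n < 2 ^ (k / 2) := by
    subst hn he
    split_ifs with h
    · exact lt_of_lt_of_le (by simpa using ht2) (Nat.pow_le_pow_right (by norm_num) h)
    · push_neg at h
      rw [Nat.div_lt_iff_lt_mul (Nat.two_pow_pos _),
        ← pow_add]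
      have : k / 2 + (Nat.log 2 t + 1 - k / 2) = Nat.log 2 t + 1 := by omega
      rw [this]; exact ht2
  intro i hi
  have h1 : popcount i ≤ k / 2 := popcount_le_of_lt_two_pow_s10 (lt_of_le_of_lt hi hnlt)
  have h2 : popcount (n - i) ≤ k / 2 :=
    popcount_le_of_lt_two_pow_s10 (lt_of_le_of_lt (Nat.sub_le _ _) hnlt)
  have hke : k / 2 + k / 2 = k := by
    subst hk
    have : 2 ^ κ = 2 * 2 ^ (κ - 1) := by
      rw [← pow_succ']
      congr 1; omega
    omega
  omega
end

section
/- Large-amount case of the splitting protocol produces at most k pieces: let κ ≥ 3, k = 2^κ, h ≥ κ, and m = h + 1 − κ. Let t be an integer with 2^{m+1} ≤ t ≤ 2^h − 1, and define d = ⌊t/2^m⌋ − 1 and c = ⌊(k − d)/2⌋; assume c ≤ m and set e = 2^{m−c} and r = ⌊t/e⌋ − d·2^c. Then for every integer i with 0 ≤ i ≤ r, d + popcount(i) + popcount(r − i) ≤ k. -/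
lemma popcount_le_size (n : ℕ) : popcount n ≤ Nat.size n := by
  rw [popcount, ← Nat.size_eq_bits_len]
  exact List.count_le_length

lemma popcount_le_of_lt {n s : ℕ} (h : n < 2 ^ s) : popcount n ≤ s :=
  (popcount_le_size n).trans (Nat.size_le.mpr h)

lemma two_pow_popcount_le (n : ℕ) : 2 ^ popcount n ≤ n + 1 := by
  induction n using Nat.strong_induction_on with
  | _ n ih =>
    rcases Nat.eq_zero_or_pos n with h0 | h0
    · simp [h0, popcount]
    rcases Nat.even_or_odd n with ⟨m, hm⟩ | ⟨m, hm⟩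
    · have hm' : n = 2 * m := by omega
      have hmpos : m ≠ 0 := by omega
      have : popcount n = popcount m := by
        rw [hm', popcount, popcount, Nat.bit0_bits m hmpos]
        simp
      rw [this]
      have := ih m (by omega)
      omega
    · have : popcount n = popcount m + 1 := by
        rw [hm, popcount, popcount, Nat.bit1_bits m]
        simp
      rw [this, pow_succ]
      have := ih m (by omega)
      omega

lemma key {a b s : ℕ} (hs : 1 ≤ s) (hab : a + b ≤ 2 ^ (s + 1) - 1) :
    popcount a + popcount b ≤ 2 * s := by
  by_contra hcon
  push_neg at hcon
  have h2 : (0:ℕ) < 2 ^ (s+1) := Nat.pow_pos (by norm_num)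
  wlog hba : popcount b ≤ popcount a generalizing a b
  · exact this (by omega) (by omega) (le_of_not_ge hba)
  have hpa : s + 1 ≤ popcount a := by omega
  have h1 : 2 ^ (s + 1) ≤ 2 ^ popcount a := Nat.pow_le_pow_right (by norm_num) hpa
  have h2 : 2 ^ popcount a ≤ a + 1 := two_pow_popcount_le a
  have hb0 : b = 0 := by omega
  have : popcount a ≤ s + 1 := popcount_le_of_lt (by omega)
  have : popcount b = 0 := by simp [hb0, popcount]
  omega

/-- Large-amount case of the splitting protocol produces at most
`k` pieces: with `κ ≥ 3`, `k = 2^κ`, `h ≥ κ`, `m = h + 1 − κ`,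
`2^(m+1) ≤ t ≤ 2^h − 1`, `d = ⌊t/2^m⌋ − 1`, `c = ⌊(k − d)/2⌋ ≤ m`,
`e = 2^(m−c)` and `r = ⌊t/e⌋ − d·2^c`, every `i ≤ r` satisfies
`d + popcount i + popcount (r − i) ≤ k`. -/
theorem stmt_11 (κ k h m t d c e r : ℕ) (hκ : 3 ≤ κ) (hk : k = 2 ^ κ)
    (hh : κ ≤ h) (hm : m = h + 1 - κ)
    (ht1 : 2 ^ (m + 1) ≤ t) (ht2 : t ≤ 2 ^ h - 1)
    (hd : d = t / 2 ^ m - 1) (hc : c = (k - d) / 2) (hcm : c ≤ m)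
    (he : e = 2 ^ (m - c)) (hr : r = t / e - d * 2 ^ c) :
    ∀ i ≤ r, d + popcount i + popcount (r - i) ≤ k := by
  intro i hi
  have hmpos : 0 < 2 ^ m := Nat.pow_pos (by norm_num)
  have hepos : 0 < e := by rw [he]; positivity
  -- q = t / 2^m
  have hq2 : 2 ≤ t / 2 ^ m := by
    rw [Nat.le_div_iff_mul_le hmpos]
    calc 2 * 2 ^ m = 2 ^ (m + 1) := by ring
    _ ≤ t := ht1
  -- h - m = κ - 1
  have hmh : m ≤ h := by omega
  have hhm : h - m = κ - 1 := by omega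
  -- t < 2^h
  have hth : t < 2 ^ h := by
    have : 0 < 2 ^ h := Nat.pow_pos (by norm_num)
    omega
  -- d bound
  have hqlt : t / 2 ^ m < 2 ^ (κ - 1) := by
    rw [Nat.div_lt_iff_lt_mul hmpos, ← pow_add]
    have : κ - 1 + m = h := by omega
    rwa [this]
  have hkk : 2 * 2 ^ (κ - 1) = 2 ^ κ := by
    rw [← pow_succ']
    congr 1
    omega
  have hdk : d + 2 ≤ 2 ^ (κ - 1) := by omega
  have hc1 : 1 ≤ c := by
    have : 8 ≤ 2 ^ κ := by calc (8:ℕ) = 2 ^ 3 := by norm_num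
                                _ ≤ 2 ^ κ := Nat.pow_le_pow_right (by norm_num) hκ
    omega
  -- t < (d+2) * 2^m
  have ht3 : t < (d + 2) * 2 ^ m := by
    have := (Nat.div_lt_iff_lt_mul hmpos).mp (Nat.lt_succ_self (t / 2 ^ m))
    have hd2 : d + 2 = t / 2 ^ m + 1 := by omega
    rwa [hd2]
  -- t / e < (d+2) * 2^c
  have hte : t / e < (d + 2) * 2 ^ c := by
    rw [Nat.div_lt_iff_lt_mul hepos, he, mul_assoc, ← pow_add]
    have : c + (m - c) = m := by omega
    rwa [this]
  -- d * 2^c ≤ t / e  (so r is genuine)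
  have hrb : r ≤ 2 ^ (c + 1) - 1 := by
    have : (d + 2) * 2 ^ c = d * 2 ^ c + 2 ^ (c + 1) := by ring
    omega
  have hsum : popcount i + popcount (r - i) ≤ 2 * c :=
    key hc1 (by omega)
  have h2c : 2 * c ≤ k - d := by omega
  have hdk2 : d ≤ k := by
    have : 2 ^ (κ - 1) ≤ 2 ^ κ := Nat.pow_le_pow_right (by norm_num) (by omega)
    omega
  omega
end

section
/- Let c ≥ 1 and a be natural numbers with a < 2^c, set n = 2^c + a, and let I be uniformly distributed on the integers {0, 1, …, n}. Then for every bit position b with 0 ≤ b ≤ c − 1, the expected value of bit_b(I) + bit_b(n − I) is at most 3/2. -/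
/-- The `b`-th binary digit of `i`, as a natural number in `{0, 1}`. -/
def bitIndicator (b i : ℕ) : ℕ := if Nat.testBit i b then 1 else 0

lemma bitIndicator_eq (b i : ℕ) : bitIndicator b i = i / 2 ^ b % 2 := by
  rw [bitIndicator, Nat.testBit_eq_decide_div_mod_eq]
  rcases Nat.mod_two_eq_zero_or_one (i / 2 ^ b) with h | h <;> simp [h]

lemma bitIndicator_le_one (b i : ℕ) : bitIndicator b i ≤ 1 := by
  rw [bitIndicator]; split <;> simp

lemma bitIndicator_periodic (b i : ℕ) :
    bitIndicator b (i + 2 ^ (b + 1)) = bitIndicator b i := by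
  have hpos : 0 < 2 ^ b := Nat.pow_pos (by norm_num)
  have h : i + 2 ^ (b + 1) = i + 2 ^ b * 2 := by ring
  rw [bitIndicator_eq, bitIndicator_eq, h, Nat.add_mul_div_left _ _ hpos,
    Nat.add_mod_right]

lemma bitIndicator_zero_of_lt {b i : ℕ} (h : i < 2 ^ b) : bitIndicator b i = 0 := by
  rw [bitIndicator_eq, Nat.div_eq_of_lt h]

lemma bitIndicator_one {b i : ℕ} (h1 : 2 ^ b ≤ i) (h2 : i < 2 ^ (b + 1)) :
    bitIndicator b i = 1 := by
  have hpos : 0 < 2 ^ b := Nat.pow_pos (by norm_num)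
  have hd1 : 1 ≤ i / 2 ^ b := (Nat.one_le_div_iff hpos).mpr h1
  have hd2 : i / 2 ^ b < 2 := by
    rw [Nat.div_lt_iff_lt_mul hpos]
    calc i < 2 ^ (b + 1) := h2
    _ = 2 * 2 ^ b := by ring
  have hone : i / 2 ^ b = 1 := Nat.le_antisymm (Nat.lt_succ_iff.mp hd2) hd1
  rw [bitIndicator_eq, hone]

lemma sum_bitIndicator_base (b : ℕ) :
    ∑ i ∈ Finset.range (2 ^ (b + 1)), bitIndicator b i = 2 ^ b := by
  have h2 : (2 : ℕ) ^ (b + 1) = 2 ^ b + 2 ^ b := by ring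
  rw [Finset.range_eq_Ico,
    ← Finset.sum_Ico_consecutive (fun i => bitIndicator b i) (Nat.zero_le (2 ^ b))
      (Nat.pow_le_pow_right (by norm_num) (Nat.le_succ b))]
  have ha : ∑ i ∈ Finset.Ico 0 (2 ^ b), bitIndicator b i = 0 :=
    Finset.sum_eq_zero fun i hi => bitIndicator_zero_of_lt (Finset.mem_Ico.mp hi).2
  have hb : ∑ i ∈ Finset.Ico (2 ^ b) (2 ^ (b + 1)), bitIndicator b i
      = ∑ _i ∈ Finset.Ico (2 ^ b) (2 ^ (b + 1)), 1 :=
    Finset.sum_congr rfl fun i hi =>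
      bitIndicator_one (Finset.mem_Ico.mp hi).1 (Finset.mem_Ico.mp hi).2
  rw [ha, hb, ← Finset.card_eq_sum_ones, Nat.card_Ico, h2]
  simp

lemma sum_bitIndicator_window (b : ℕ) : ∀ t : ℕ,
    ∑ i ∈ Finset.Ico t (t + 2 ^ (b + 1)), bitIndicator b i = 2 ^ b := by
  intro t
  induction t with
  | zero =>
    rw [Nat.zero_add, ← Finset.range_eq_Ico]
    exact sum_bitIndicator_base b
  | succ t ih =>
    have hk : 0 < 2 ^ (b + 1) := Nat.pow_pos (by norm_num)
    have h1 : t + 1 + 2 ^ (b + 1) = (t + 2 ^ (b + 1)) + 1 := by ring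
    rw [h1, Finset.sum_Ico_succ_top (by omega), bitIndicator_periodic]
    have h2 : ∑ i ∈ Finset.Ico t (t + 2 ^ (b + 1)), bitIndicator b i
        = bitIndicator b t + ∑ i ∈ Finset.Ico (t + 1) (t + 2 ^ (b + 1)), bitIndicator b i := by
      rw [← Finset.sum_eq_sum_Ico_succ_bot (by omega)]
    omega

lemma count_le (b : ℕ) : ∀ m : ℕ, 4 * ∑ i ∈ Finset.range m, bitIndicator b i ≤ 3 * m := by
  intro m
  induction m using Nat.strong_induction_on with
  | _ m ih =>
    have hpos : 0 < 2 ^ b := Nat.pow_pos (by norm_num)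
    have h2 : (2 : ℕ) ^ (b + 1) = 2 ^ b + 2 ^ b := by ring
    rcases le_or_gt m (2 ^ b) with hm | hm
    · have : ∑ i ∈ Finset.range m, bitIndicator b i = 0 :=
        Finset.sum_eq_zero fun i hi =>
          bitIndicator_zero_of_lt (lt_of_lt_of_le (Finset.mem_range.mp hi) hm)
      omega
    rcases le_or_gt m (2 ^ (b + 1)) with hm2 | hm2
    · have hsplit : ∑ i ∈ Finset.range m, bitIndicator b i
          = ∑ i ∈ Finset.Ico 0 (2 ^ b), bitIndicator b i
            + ∑ i ∈ Finset.Ico (2 ^ b) m, bitIndicator b i := by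
        rw [Finset.range_eq_Ico,
          ← Finset.sum_Ico_consecutive _ (Nat.zero_le (2 ^ b)) hm.le]
      have ha : ∑ i ∈ Finset.Ico 0 (2 ^ b), bitIndicator b i = 0 :=
        Finset.sum_eq_zero fun i hi => bitIndicator_zero_of_lt (Finset.mem_Ico.mp hi).2
      have hb : ∑ i ∈ Finset.Ico (2 ^ b) m, bitIndicator b i ≤ m - 2 ^ b := by
        calc ∑ i ∈ Finset.Ico (2 ^ b) m, bitIndicator b i
            ≤ ∑ _i ∈ Finset.Ico (2 ^ b) m, 1 :=
              Finset.sum_le_sum fun i _ => bitIndicator_le_one b i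
          _ = m - 2 ^ b := by rw [Finset.sum_const, Nat.card_Ico, smul_eq_mul, mul_one]
      omega
    · -- m > 2^(b+1): split off a full window at the top
      have hsplit : ∑ i ∈ Finset.range m, bitIndicator b i
          = ∑ i ∈ Finset.range (m - 2 ^ (b + 1)), bitIndicator b i
            + ∑ i ∈ Finset.Ico (m - 2 ^ (b + 1)) m, bitIndicator b i := by
        rw [Finset.range_eq_Ico, Finset.range_eq_Ico]
        exact (Finset.sum_Ico_consecutive (fun i => bitIndicator b i) (Nat.zero_le _) (Nat.sub_le m _)).symm
      have hw : ∑ i ∈ Finset.Ico (m - 2 ^ (b + 1)) m, bitIndicator b i = 2 ^ b := by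
        have := sum_bitIndicator_window b (m - 2 ^ (b + 1))
        rwa [Nat.sub_add_cancel hm2.le] at this
      have hrec := ih (m - 2 ^ (b + 1)) (by omega)
      omega

/-- For `c ≥ 1`, `a < 2^c`, `n = 2^c + a` and `I` uniform on
`{0, …, n}`, every bit position `b ≤ c − 1` satisfies
`E[bit_b(I) + bit_b(n − I)] ≤ 3/2`. -/
theorem stmt_12 (c a n : ℕ) (hc : 1 ≤ c) (ha : a < 2 ^ c) (hn : n = 2 ^ c + a)
    (b : ℕ) (hb : b ≤ c - 1) :
    (∑' i : ℕ, ((PMF.uniformOfFinset (Finset.range (n + 1))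
        (Finset.nonempty_range_iff.mpr (Nat.succ_ne_zero _))) i).toReal *
        ((bitIndicator b i + bitIndicator b (n - i) : ℕ) : ℝ)) ≤ 3 / 2 := by
  have hne := Finset.nonempty_range_iff.mpr (Nat.succ_ne_zero n)
  have htsum : (∑' i : ℕ, ((PMF.uniformOfFinset (Finset.range (n + 1)) hne) i).toReal *
      ((bitIndicator b i + bitIndicator b (n - i) : ℕ) : ℝ))
      = ∑ i ∈ Finset.range (n + 1),
        ((PMF.uniformOfFinset (Finset.range (n + 1)) hne) i).toReal *
        ((bitIndicator b i + bitIndicator b (n - i) : ℕ) : ℝ) := by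
    apply tsum_eq_sum
    intro i hi
    rw [PMF.uniformOfFinset_apply, if_neg hi]
    simp
  rw [htsum]
  have happ : ∀ i ∈ Finset.range (n + 1),
      ((PMF.uniformOfFinset (Finset.range (n + 1)) hne) i).toReal *
        ((bitIndicator b i + bitIndicator b (n - i) : ℕ) : ℝ)
      = (n + 1 : ℝ)⁻¹ * ((bitIndicator b i + bitIndicator b (n - i) : ℕ) : ℝ) := by
    intro i hi
    rw [PMF.uniformOfFinset_apply, if_pos hi, Finset.card_range]
    congr 1
    rw [ENNReal.toReal_inv, ENNReal.toReal_natCast]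
    push_cast
    ring
  rw [Finset.sum_congr rfl happ, ← Finset.mul_sum, ← Nat.cast_sum]
  -- the sum of the bit counts
  have hrefl : ∑ i ∈ Finset.range (n + 1), bitIndicator b (n - i)
      = ∑ i ∈ Finset.range (n + 1), bitIndicator b i := by
    have := Finset.sum_range_reflect (fun i => bitIndicator b i) (n + 1)
    simpa using this
  have hsum : ∑ i ∈ Finset.range (n + 1), (bitIndicator b i + bitIndicator b (n - i))
      = 2 * ∑ i ∈ Finset.range (n + 1), bitIndicator b i := by
    rw [Finset.sum_add_distrib, hrefl]; ring
  have hcount := count_le b (n + 1)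
  set S := ∑ i ∈ Finset.range (n + 1), bitIndicator b i with hS
  have hkey : ∑ i ∈ Finset.range (n + 1), (bitIndicator b i + bitIndicator b (n - i))
      = 2 * S := hsum
  rw [hkey]
  have hnpos : (0 : ℝ) < (n : ℝ) + 1 := by positivity
  rw [inv_mul_le_iff₀ hnpos]
  have : (4 : ℝ) * S ≤ 3 * (n + 1) := by exact_mod_cast hcount
  push_cast
  nlinarith
end
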